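/- arXiv:0709.2097 — 2 statements merged into one kernel-verified Lean document; each statement's English description precedes it below -/
import Mathlib

section
/- Let $m \ge 4$, $I = \{3,\ldots,m\}$, let $\alpha \in \mathbb{R}_{>0}^m$ be generic with $\alpha_1 > \alpha_2$, and let $k_1,\ldots,k_m$ be nonnegative integers with $k_1 = k_2 = 0$ and $\sum_{i=1}^m k_i = m-3$. Let $\mathcal{S}(\alpha)$ be the family of all subsets $R \subseteq \{1,\ldots,m\}$ with $\sum_{i\in R}\alpha_i - \sum_{i\notin R}\alpha_i < 0$, and let $\mathcal{T}(\alpha)$ be the family of triangular subsets of $I$. Then $-\frac{1}{2}\sum_{R\in\mathcal{S}(\alpha)} (-1)^{|R| + \sum_{i\in R}k_i} = \sum_{J\in\mathcal{T}(\alpha)} (-1)^{(\sum_{i\in I\setminus J}k_i) + m - |J|}$. -/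
/-!
For `J ⊆ I = {3,…,m}` group the four subsets `J`, `J ∪ {2}`, `J ∪ {1}`, `J ∪ {1,2}` of
`{1,…,m}`: their signed sums are `ℓ_J ± α₂ ± α₁` and their signs are `s, -s, -s, s`. Because
`0 < α₂ < α₁`, the signed count of the negative ones is `s` exactly when `α₁ - α₂ ≤ ℓ_J ≤ α₁ + α₂`
(`J` triangular) and `-s` exactly when the same holds for `-ℓ_J = ℓ_{I \ J}`; genericity rules
out the boundary cases. Since `∑ k = m - 3` the signs of `J` and `I \ J` are opposite, so
after reindexing by `J ↦ I \ J` the left-hand sum is `-2` times the right-hand one.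
-/

/-- A family of positive reals indexed by `S` is *generic* if no `±1`-signed sum vanishes. -/
def IsGeneric (β : ℕ → ℝ) (S : Finset ℕ) : Prop :=
  ∀ ε : ℕ → ℝ, (∀ i ∈ S, ε i = 1 ∨ ε i = -1) → ∑ i ∈ S, ε i * β i ≠ 0

/-- `ell α m J` is the signed sum `∑_{i∈J} α i - ∑_{i ∈ {3,…,m} \ J} α i`. -/
noncomputable def ell (α : ℕ → ℝ) (m : ℕ) (J : Finset ℕ) : ℝ :=
  ∑ i ∈ J, α i - ∑ i ∈ Finset.Icc 3 m \ J, α i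

/-- A subset `J ⊆ {3,…,m}` is *triangular* for the weights `α` if `ell α m J > 0` and
`α 1`, `α 2`, `ell α m J` satisfy the three triangle inequalities. -/
def Triangular (α : ℕ → ℝ) (m : ℕ) (J : Finset ℕ) : Prop :=
  J ⊆ Finset.Icc 3 m ∧ 0 < ell α m J ∧
    α 1 ≤ α 2 + ell α m J ∧ α 2 ≤ α 1 + ell α m J ∧ ell α m J ≤ α 1 + α 2

open Finset

theorem Finset.sum_powerset_sdiff {α β : Type*} [DecidableEq α] [AddCommMonoid β]
    (s : Finset α) (f : Finset α → β) :
    ∑ t ∈ s.powerset, f (s \ t) = ∑ t ∈ s.powerset, f t :=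
  sum_nbij' (s \ ·) (s \ ·) (fun _ _ ↦ mem_powerset.2 sdiff_subset)
    (fun _ _ ↦ mem_powerset.2 sdiff_subset)
    (fun _ ht ↦ sdiff_sdiff_eq_self (mem_powerset.1 ht))
    (fun _ ht ↦ sdiff_sdiff_eq_self (mem_powerset.1 ht)) fun _ _ ↦ rfl

theorem Finset.sum_powerset_insert_insert {α β : Type*} [DecidableEq α] [AddCommMonoid β]
    {s : Finset α} {a b : α} (ha : a ∉ insert b s) (hb : b ∉ s) (f : Finset α → β) :
    ∑ t ∈ (insert a (insert b s)).powerset, f t =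
      ∑ t ∈ s.powerset, ((f t + f (insert b t)) + (f (insert a t) + f (insert a (insert b t)))) := by
  rw [sum_powerset_insert ha, sum_powerset_insert hb, sum_powerset_insert hb,
    ← sum_add_distrib, ← sum_add_distrib, ← sum_add_distrib]

section SignedSum

variable (α : ℕ → ℝ)

-- `ell α m` is `signedSum α (Icc 3 m)` definitionally.
def signedSum (S R : Finset ℕ) : ℝ :=
  ∑ i ∈ R, α i - ∑ i ∈ S \ R, α i

variable {α}

theorem signedSum_ne_zero {S R : Finset ℕ} (hgen : IsGeneric α S) (hR : R ⊆ S) :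
    signedSum α S R ≠ 0 := by
  have hε : ∀ i ∈ S, (if i ∈ R then (1 : ℝ) else -1) = 1 ∨ (if i ∈ R then (1 : ℝ) else -1) = -1 :=
    fun i _ ↦ by split_ifs <;> simp
  convert hgen _ hε using 1
  rw [signedSum, sub_eq_add_neg, ← sum_neg_distrib]
  simp only [ite_mul, one_mul, neg_one_mul, sum_ite, filter_mem_eq_inter, inter_eq_right.2 hR,
    filter_notMem_eq_sdiff]

theorem signedSum_insert_insert {S R : Finset ℕ} {i : ℕ} (hS : i ∉ S) (hR : i ∉ R) :
    signedSum α (insert i S) (insert i R) = signedSum α S R + α i := by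
  rw [signedSum, signedSum, sum_insert hR, insert_sdiff_insert, sdiff_insert_of_notMem hS]
  ring

theorem signedSum_insert {S R : Finset ℕ} {i : ℕ} (hS : i ∉ S) (hR : i ∉ R) :
    signedSum α (insert i S) R = signedSum α S R - α i := by
  rw [signedSum, signedSum, insert_sdiff_of_notMem _ hR,
    sum_insert fun h ↦ hS (mem_sdiff.1 h).1]
  ring

theorem signedSum_sdiff {S R : Finset ℕ} (hR : R ⊆ S) :
    signedSum α S (S \ R) = -signedSum α S R := by
  rw [signedSum, signedSum, Finset.sdiff_sdiff_eq_self hR]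
  ring

end SignedSum

noncomputable def subsetSign (k : ℕ → ℕ) (R : Finset ℕ) : ℝ :=
  (-1) ^ (R.card + ∑ i ∈ R, k i)

theorem subsetSign_insert {k : ℕ → ℕ} {R : Finset ℕ} {i : ℕ} (hR : i ∉ R) (hk : k i = 0) :
    subsetSign k (insert i R) = -subsetSign k R := by
  rw [subsetSign, subsetSign, card_insert_of_notMem hR, sum_insert hR, hk, zero_add,
    add_right_comm, pow_succ, mul_neg_one]

theorem subsetSign_sdiff {k : ℕ → ℕ} {S R : Finset ℕ} (hR : R ⊆ S) :
    subsetSign k (S \ R) = subsetSign k S * subsetSign k R := by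
  have hsum : ((S \ R).card + ∑ i ∈ S \ R, k i) + (R.card + ∑ i ∈ R, k i) =
      S.card + ∑ i ∈ S, k i := by
    rw [← sum_sdiff hR, ← card_sdiff_add_card_eq_card hR]
    ring
  have hpow (a b : ℕ) : (-1 : ℝ) ^ a = (-1) ^ (a + b) * (-1) ^ b := by
    rw [pow_add, mul_assoc, ← pow_add, ← two_mul, pow_mul, neg_one_sq, one_pow, mul_one]
  rw [subsetSign, subsetSign, subsetSign, ← hsum]
  exact hpow _ _

-- At `x = a - b` and `x = -(a + b)` both sides agree anyway; only `x = a + b` and `x = b - a`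
-- have to be excluded.
theorem ite_signs_of_neg_eq_triangle (s : ℝ) {a b x : ℝ} (hb : 0 < b) (hab : b < a)
    (hx₁ : x - b - a ≠ 0) (hx₂ : x - b + a ≠ 0) :
    (if x - b - a < 0 then s else 0) + (if x + b - a < 0 then -s else 0) +
        ((if x - b + a < 0 then -s else 0) + (if x + b + a < 0 then s else 0)) =
      -((if 0 < x ∧ a ≤ b + x ∧ b ≤ a + x ∧ x ≤ a + b then -s else 0) +
        (if 0 < -x ∧ a ≤ b + -x ∧ b ≤ a + -x ∧ -x ≤ a + b then s else 0)) := by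
  grind

theorem Icc_one_eq_insert_insert {m : ℕ} (hm : 2 ≤ m) :
    Icc 1 m = insert 1 (insert 2 (Icc 3 m)) := by
  rw [show insert 2 (Icc 3 m) = Icc 2 m from insert_Icc_add_one_left_eq_Icc (by omega),
    show insert 1 (Icc 2 m) = Icc 1 m from insert_Icc_add_one_left_eq_Icc (by omega)]

theorem neg_one_pow_eq_subsetSign_sdiff {m : ℕ} (hm : 2 ≤ m) (k : ℕ → ℕ) {J : Finset ℕ}
    (hJ : J ⊆ Icc 3 m) :
    (-1 : ℝ) ^ ((∑ i ∈ Icc 3 m \ J, k i) + m - J.card) = subsetSign k (Icc 3 m \ J) := by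
  have hcard : (Icc 3 m \ J).card + J.card = m - 2 := by
    rw [card_sdiff_add_card_eq_card hJ, Nat.card_Icc]
    omega
  rw [subsetSign, show (∑ i ∈ Icc 3 m \ J, k i) + m - J.card =
      ((Icc 3 m \ J).card + ∑ i ∈ Icc 3 m \ J, k i) + 2 by omega, pow_add, neg_one_sq, mul_one]

theorem subsetSign_Icc_three {m : ℕ} (hm : 3 ≤ m) {k : ℕ → ℕ}
    (hk : ∑ i ∈ Icc 3 m, k i = m - 3) : subsetSign k (Icc 3 m) = -1 := by
  rw [subsetSign, hk, Nat.card_Icc]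
  exact Odd.neg_one_pow ⟨m - 3, by omega⟩

noncomputable def negTerm (α : ℕ → ℝ) (k : ℕ → ℕ) (S R : Finset ℕ) : ℝ :=
  if signedSum α S R < 0 then subsetSign k R else 0

open Classical in
noncomputable def triangularTerm (α : ℕ → ℝ) (k : ℕ → ℕ) (m : ℕ) (J : Finset ℕ) : ℝ :=
  if Triangular α m J then subsetSign k (Icc 3 m \ J) else 0

theorem negTerm_quadruple_eq {m : ℕ} (hm : 3 ≤ m) {α : ℕ → ℝ}
    (hgen : IsGeneric α (Icc 1 m)) (hα₂ : 0 < α 2) (h12 : α 2 < α 1) {k : ℕ → ℕ}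
    (hk1 : k 1 = 0) (hk2 : k 2 = 0) (hkI : ∑ i ∈ Icc 3 m, k i = m - 3) {J : Finset ℕ}
    (hJ : J ⊆ Icc 3 m) :
    let f := negTerm α k (Icc 1 m)
    (f J + f (insert 2 J)) + (f (insert 1 J) + f (insert 1 (insert 2 J))) =
      -(triangularTerm α k m J + triangularTerm α k m (Icc 3 m \ J)) := by
  intro f
  have h2I : 2 ∉ Icc 3 m := by simp
  have h1I : 1 ∉ insert 2 (Icc 3 m) := by simp
  have h1J : 1 ∉ J := fun h ↦ by simpa using hJ h
  have h2J : 2 ∉ J := fun h ↦ h2I (hJ h)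
  have h12J : 1 ∉ insert 2 J := by simp [h1J]
  have hIcc := Icc_one_eq_insert_insert (by omega : 2 ≤ m)
  have hJ1 : J ⊆ Icc 1 m := hJ.trans (Icc_subset_Icc (by norm_num) le_rfl)
  have hJ1' : insert 1 J ⊆ Icc 1 m := insert_subset (by simp; omega) hJ1
  set x := ell α m J
  have hx : signedSum α (Icc 3 m) J = x := rfl
  have hxc : ell α m (Icc 3 m \ J) = -x := signedSum_sdiff hJ
  have hs : subsetSign k (Icc 3 m \ J) = -subsetSign k J := by
    rw [subsetSign_sdiff hJ, subsetSign_Icc_three hm hkI, neg_one_mul]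
  have hσ₁ : signedSum α (Icc 1 m) J = x - α 2 - α 1 := by
    rw [hIcc, signedSum_insert h1I h1J, signedSum_insert h2I h2J, hx]
  have hσ₂ : signedSum α (Icc 1 m) (insert 2 J) = x + α 2 - α 1 := by
    rw [hIcc, signedSum_insert h1I h12J, signedSum_insert_insert h2I h2J, hx]
  have hσ₃ : signedSum α (Icc 1 m) (insert 1 J) = x - α 2 + α 1 := by
    rw [hIcc, signedSum_insert_insert h1I h1J, signedSum_insert h2I h2J, hx]
  have hσ₄ : signedSum α (Icc 1 m) (insert 1 (insert 2 J)) = x + α 2 + α 1 := by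
    rw [hIcc, signedSum_insert_insert h1I h12J, signedSum_insert_insert h2I h2J, hx]
  simp only [f, negTerm, triangularTerm, Triangular, hσ₁, hσ₂, hσ₃, hσ₄, hxc,
    subsetSign_insert h12J hk1, subsetSign_insert h1J hk1, subsetSign_insert h2J hk2, neg_neg,
    Finset.sdiff_sdiff_eq_self hJ, hs, hJ, sdiff_subset, true_and]
  exact ite_signs_of_neg_eq_triangle _ hα₂ h12 (hσ₁ ▸ signedSum_ne_zero hgen hJ1)
    (hσ₃ ▸ signedSum_ne_zero hgen hJ1')

open Classical in
theorem konno_takakura_eq_triangular (m : ℕ) (hm : 4 ≤ m)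
    (α : ℕ → ℝ) (hpos : ∀ i ∈ Finset.Icc 1 m, 0 < α i)
    (hgen : IsGeneric α (Finset.Icc 1 m)) (h12 : α 2 < α 1)
    (k : ℕ → ℕ) (hk1 : k 1 = 0) (hk2 : k 2 = 0)
    (hksum : ∑ i ∈ Finset.Icc 1 m, k i = m - 3) :
    -(1 / 2 : ℝ) *
        ∑ R ∈ (Finset.Icc 1 m).powerset.filter
            (fun R => ∑ i ∈ R, α i - ∑ i ∈ Finset.Icc 1 m \ R, α i < 0),
          (-1 : ℝ) ^ (R.card + ∑ i ∈ R, k i) =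
      ∑ J ∈ (Finset.Icc 3 m).powerset.filter (fun J => Triangular α m J),
        (-1 : ℝ) ^ ((∑ i ∈ Finset.Icc 3 m \ J, k i) + m - J.card) := by
  have hIcc := Icc_one_eq_insert_insert (by omega : 2 ≤ m)
  have hkI : ∑ i ∈ Icc 3 m, k i = m - 3 := by
    rw [hIcc, sum_insert (by simp), sum_insert (by simp), hk1, hk2] at hksum
    simpa using hksum
  have hα₂ : 0 < α 2 := hpos 2 (by simp; omega)
  have hsplit := sum_powerset_insert_insert (s := Icc 3 m) (a := 1) (b := 2) (by simp) (by simp)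
    (negTerm α k (Icc 1 m))
  rw [← hIcc] at hsplit
  calc -(1 / 2 : ℝ) * ∑ R ∈ {R ∈ (Icc 1 m).powerset | signedSum α (Icc 1 m) R < 0},
          subsetSign k R
      = -(1 / 2) * ∑ J ∈ (Icc 3 m).powerset,
          -(triangularTerm α k m J + triangularTerm α k m (Icc 3 m \ J)) := by
        rw [sum_filter, ← sum_congr rfl fun J hJ ↦ negTerm_quadruple_eq (by omega) hgen hα₂ h12
          hk1 hk2 hkI (mem_powerset.1 hJ), ← hsplit]
        rfl
    _ = ∑ J ∈ (Icc 3 m).powerset, triangularTerm α k m J := by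
        rw [sum_neg_distrib, sum_add_distrib, sum_powerset_sdiff (f := triangularTerm α k m)]
        ring
    _ = _ := by
        rw [sum_filter]
        exact sum_congr rfl fun J hJ ↦ by
          rw [triangularTerm, neg_one_pow_eq_subsetSign_sdiff (by omega) k (mem_powerset.1 hJ)]
end

section
/- For $m \ge 5$ odd and integer $k$ with $0 \le 2k \le m-3$, the equilateral intersection number $\rho_{m,2k} := (-1)^k \binom{\frac{m-3}{2}}{k}\binom{m-2}{\frac{m-1}{2}} \big/ \binom{m-2}{2k+1}$ satisfies $\rho_{m,2k} = \sum_{j=0}^{2k+1}(-1)^j \binom{2k+1}{j}\binom{m-2k-3}{\frac{m-3}{2}-j}$. -/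
/-!
Write `m = 2n + 3`. The right-hand side is the Krawtchouk value
`K_n(2k+1; 2n+1) = [xⁿ] (1-x)^(2k+1) (1+x)^(2n-2k)`. Krawtchouk reciprocity
`C(N,a) K_n(a; N) = C(N,n) K_a(n; N)` holds termwise, since `C(N,a) C(a,j) C(N-a,n-j)` is the
multinomial coefficient `N! / (j! (a-j)! (n-j)! (N-a-n+j)!)`, symmetric in `a` and `n`. On the
other side, `K_(2k+1)(n; 2n+1) = [x^(2k+1)] (1-x²)ⁿ (1+x) = (-1)^k C(n,k)`.
-/

open Finset Polynomial

theorem Nat.choose_mul_choose_sub_comm (M A B : ℕ) :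
    M.choose A * (M - A).choose B = M.choose B * (M - B).choose A := by
  have hA := Nat.choose_mul (n := M) (k := A + B) (s := A) (by omega)
  have hB := Nat.choose_mul (n := M) (k := A + B) (s := B) (by omega)
  rw [Nat.add_sub_cancel_left] at hA
  rw [Nat.add_sub_cancel] at hB
  rw [← hA, ← hB, Nat.choose_symm_add]

theorem Nat.choose_mul_choose_mul_choose_sub_comm {N a n j : ℕ} (hja : j ≤ a) (hjn : j ≤ n) :
    N.choose a * a.choose j * (N - a).choose (n - j) =
      N.choose n * n.choose j * (N - n).choose (a - j) := by
  rw [Nat.choose_mul hja, Nat.choose_mul hjn, mul_assoc, mul_assoc]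
  congr 1
  have h := Nat.choose_mul_choose_sub_comm (N - j) (a - j) (n - j)
  rwa [show N - j - (a - j) = N - a by omega, show N - j - (n - j) = N - n by omega] at h

theorem Polynomial.coeff_one_sub_X_pow (R : Type*) [CommRing R] (a k : ℕ) :
    ((1 - X : R[X]) ^ a).coeff k = (-1) ^ k * a.choose k := by
  rw [show (1 - X : R[X]) = C (-1) * X + 1 by simp; ring, add_pow, finsetSum_coeff]
  simp_rw [one_pow, mul_one, mul_pow, ← C_pow, coeff_mul_natCast, coeff_C_mul, coeff_X_pow]
  rw [sum_eq_single k]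
  · simp
  · intro j _ hjk
    simp [hjk.symm]
  · intro hk
    rw [mem_range, not_lt] at hk
    simp [Nat.choose_eq_zero_of_lt hk]

def krawtchouk (N a n : ℕ) : ℤ :=
  ∑ j ∈ range (min a n + 1), (-1) ^ j * a.choose j * (N - a).choose (n - j)

theorem choose_mul_krawtchouk_comm (N a n : ℕ) :
    N.choose a * krawtchouk N a n = N.choose n * krawtchouk N n a := by
  rw [krawtchouk, krawtchouk, mul_sum, mul_sum, min_comm]
  refine sum_congr rfl fun j hj => ?_
  rw [mem_range] at hj
  have h := congrArg (Nat.cast : ℕ → ℤ)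
    (Nat.choose_mul_choose_mul_choose_sub_comm (N := N) (by omega : j ≤ a) (by omega : j ≤ n))
  push_cast at h
  linear_combination (-1) ^ j * h

theorem krawtchouk_eq_sum_range_ite (N a n : ℕ) :
    krawtchouk N a n = ∑ j ∈ range (a + 1),
      if j ≤ n then (-1 : ℤ) ^ j * a.choose j * (N - a).choose (n - j) else 0 := by
  rw [← sum_filter, krawtchouk]
  congr 1
  ext j
  simp only [mem_range, mem_filter]
  omega

theorem krawtchouk_eq_coeff (N a n : ℕ) :
    krawtchouk N a n = ((1 - X : ℤ[X]) ^ a * (1 + X) ^ (N - a)).coeff n := by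
  rw [coeff_mul, Nat.sum_antidiagonal_eq_sum_range_succ_mk, krawtchouk]
  simp_rw [coeff_one_sub_X_pow, coeff_one_add_X_pow]
  refine sum_subset (range_subset_range.2 (by omega)) fun j hj hj' => ?_
  simp only [mem_range, not_lt] at hj hj'
  simp [Nat.choose_eq_zero_of_lt (by omega : a < j)]

theorem krawtchouk_two_mul_add_one (n k : ℕ) :
    krawtchouk (2 * n + 1) n (2 * k + 1) = (-1) ^ k * n.choose k := by
  have hsq : (1 - X : ℤ[X]) * (1 + X) = expand ℤ 2 (1 - X) := by simp; ring
  rw [krawtchouk_eq_coeff, show 2 * n + 1 - n = n + 1 by omega, pow_succ, ← mul_assoc, ← mul_pow,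
    hsq, ← map_pow, mul_add, mul_one, coeff_add, coeff_mul_X, coeff_expand two_pos,
    coeff_expand two_pos, if_neg (by omega), if_pos (by omega), zero_add,
    Nat.mul_div_cancel_left _ two_pos, coeff_one_sub_X_pow]

theorem rho_eq_alternating_sum (m k : ℕ) (hm : 5 ≤ m) (hmodd : Odd m)
    (hk : 2 * k ≤ m - 3) :
    ((-1 : ℚ) ^ k * (((m - 3) / 2).choose k) * ((m - 2).choose ((m - 1) / 2))) /
        ((m - 2).choose (2 * k + 1)) =
      ∑ j ∈ Finset.range (2 * k + 2),
        if j ≤ (m - 3) / 2 then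
          (-1 : ℚ) ^ j * ((2 * k + 1).choose j) *
            ((m - 2 * k - 3).choose ((m - 3) / 2 - j))
        else 0 := by
  obtain ⟨n, rfl⟩ : ∃ n, m = 2 * n + 3 := by obtain ⟨t, rfl⟩ := hmodd; exact ⟨t - 1, by omega⟩
  have hkn : 2 * k + 1 ≤ 2 * n + 1 := by omega
  rw [show (2 * n + 3 - 3) / 2 = n by omega, show 2 * n + 3 - 2 = 2 * n + 1 by omega,
    show (2 * n + 3 - 1) / 2 = n + 1 by omega, Nat.choose_symm_half,
    show 2 * n + 3 - 2 * k - 3 = 2 * n + 1 - (2 * k + 1) by omega,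
    show 2 * k + 2 = 2 * k + 1 + 1 from rfl,
    div_eq_iff (by exact_mod_cast (Nat.choose_pos hkn).ne')]
  have key := choose_mul_krawtchouk_comm (2 * n + 1) (2 * k + 1) n
  rw [krawtchouk_two_mul_add_one, krawtchouk_eq_sum_range_ite] at key
  have key_rat := congrArg (Int.cast : ℤ → ℚ) key
  push_cast at key_rat ⊢
  linear_combination -key_rat
end
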